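/- Let β > 0, a ∈ ℝ, and let s > 0 satisfy s^β > |a|. Then ∫_0^∞ e^(-st) (1 − E_β(-a t^β)) dt = a / (s (s^β + a)), and in particular the integral converges absolutely. -/

import Mathlib

/-!
Expanding `E_β(x t^β) = ∑ₖ xᵏ t^{βk} / Γ(βk + 1)` and integrating termwise against `e^{-st}`,
`∫₀^∞ e^{-st} t^c dt = Γ(c + 1) / s^{c + 1}` cancels the Gamma factors, so the Laplace transform of
`E_β(x t^β)` is the geometric series `∑ₖ xᵏ / s^{βk + 1} = s^{β - 1} / (s^β - x)`. The same
computation with `|x|` in place of `x` bounds the integrals of the absolute values of the terms by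
a convergent geometric series, which justifies the termwise integration (and, almost everywhere,
the convergence of the series itself). Taking `x = -a` and subtracting from `∫₀^∞ e^{-st} dt = 1/s`
gives the claim.
-/

open MeasureTheory Real Set
open scoped ENNReal

/-- The two-parameter Mittag-Leffler function `E_{α,β}(x) = ∑_{k=0}^∞ x^k / Γ(αk + β)`;
the one-parameter function is `E_β = E_{β,1}`. -/
noncomputable def mittagLeffler (α β x : ℝ) : ℝ :=
  ∑' k : ℕ, x ^ k / Real.Gamma (α * k + β)

theorem MeasureTheory.integrable_tsum_of_summable_integral_norm {α E : Type*} [MeasurableSpace α]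
    {μ : Measure α} [NormedAddCommGroup E] [CompleteSpace E] {F : ℕ → α → E}
    (hF_int : ∀ i, Integrable (F i) μ) (hF_sum : Summable fun i ↦ ∫ a, ‖F i a‖ ∂μ) :
    Integrable (fun a ↦ ∑' i, F i a) μ := by
  have hmeas i : AEStronglyMeasurable (F i) μ := (hF_int i).aestronglyMeasurable
  have hlintegral : ∫⁻ a, ∑' i, ‖F i a‖ₑ ∂μ < ∞ := by
    rw [lintegral_tsum fun i ↦ (hmeas i).enorm]
    simp_rw [← ofReal_integral_norm_eq_lintegral_enorm (hF_int _)]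
    rw [← ENNReal.ofReal_tsum_of_nonneg (fun i ↦ integral_nonneg fun _ ↦ norm_nonneg _) hF_sum]
    exact ENNReal.ofReal_lt_top
  have hsummable : ∀ᵐ a ∂μ, Summable fun i ↦ F i a := by
    filter_upwards [ae_lt_top' (AEMeasurable.tsum fun i ↦ (hmeas i).enorm) hlintegral.ne]
      with a ha
    refine Summable.of_norm ?_
    simp_rw [← coe_nnnorm]
    exact NNReal.summable_coe.2 (ENNReal.tsum_coe_ne_top_iff_summable.1 ha.ne)
  refine ⟨aestronglyMeasurable_of_tendsto_ae Filter.atTop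
    (fun n : ℕ ↦ Finset.aestronglyMeasurable_fun_sum (Finset.range n) fun i _ ↦ hmeas i) ?_, ?_⟩
  · filter_upwards [hsummable] with a ha using ha.hasSum.tendsto_sum_nat
  · exact (lintegral_mono fun a ↦ enorm_tsum_le_tsum_enorm).trans_lt hlintegral

section Laplace

variable {s c : ℝ}

theorem integrableOn_exp_neg_mul_mul_rpow (hc : -1 < c) (hs : 0 < s) :
    IntegrableOn (fun t ↦ exp (-s * t) * t ^ c) (Ioi 0) := by
  simpa [mul_comm] using integrableOn_rpow_mul_exp_neg_mul_rpow hc one_pos hs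

theorem integral_exp_neg_mul_mul_rpow (hc : -1 < c) (hs : 0 < s) :
    ∫ t in Ioi 0, exp (-s * t) * t ^ c = Gamma (c + 1) / s ^ (c + 1) := by
  have h := integral_rpow_mul_exp_neg_mul_Ioi (a := c + 1) (by linarith) hs
  rw [add_sub_cancel_right, one_div, inv_rpow hs.le, inv_mul_eq_div] at h
  simpa [mul_comm] using h

end Laplace

section MittagLefflerTerm

variable {β s : ℝ}

theorem eqOn_exp_neg_mul_mul_pow_div_Gamma (x : ℝ) (k : ℕ) :
    EqOn (fun t ↦ exp (-s * t) * ((x * t ^ β) ^ k / Gamma (β * k + 1)))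
      (fun t ↦ x ^ (k : ℕ) / Gamma (β * k + 1) * (exp (-s * t) * t ^ (β * k))) (Ioi 0) := by
  intro t ht
  dsimp only
  rw [mul_pow, ← rpow_mul_natCast (le_of_lt ht)]
  ring

theorem integrableOn_exp_neg_mul_mul_pow_div_Gamma (hβ : 0 ≤ β) (hs : 0 < s) (x : ℝ) (k : ℕ) :
    IntegrableOn (fun t ↦ exp (-s * t) * ((x * t ^ β) ^ k / Gamma (β * k + 1))) (Ioi 0) := by
  have hc : -1 < β * k := by linarith [mul_nonneg hβ k.cast_nonneg]
  exact IntegrableOn.congr_fun ((integrableOn_exp_neg_mul_mul_rpow hc hs).const_mul _)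
    (eqOn_exp_neg_mul_mul_pow_div_Gamma x k).symm measurableSet_Ioi

theorem integral_exp_neg_mul_mul_pow_div_Gamma (hβ : 0 ≤ β) (hs : 0 < s) (x : ℝ) (k : ℕ) :
    ∫ t in Ioi 0, exp (-s * t) * ((x * t ^ β) ^ k / Gamma (β * k + 1))
      = x ^ (k : ℕ) / s ^ (β * k + 1) := by
  have hc : -1 < β * k := by linarith [mul_nonneg hβ k.cast_nonneg]
  have hΓ : Gamma (β * k + 1) ≠ 0 := (Gamma_pos_of_pos (by linarith)).ne'
  rw [setIntegral_congr_fun measurableSet_Ioi (eqOn_exp_neg_mul_mul_pow_div_Gamma x k),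
    integral_const_mul, integral_exp_neg_mul_mul_rpow hc hs]
  field_simp

theorem norm_exp_neg_mul_mul_pow_div_Gamma (hβ : 0 ≤ β) {t : ℝ} (ht : 0 < t) (x : ℝ) (k : ℕ) :
    ‖exp (-s * t) * ((x * t ^ β) ^ k / Gamma (β * k + 1))‖
      = exp (-s * t) * ((|x| * t ^ β) ^ k / Gamma (β * k + 1)) := by
  have hΓ : 0 < Gamma (β * k + 1) := Gamma_pos_of_pos (by positivity)
  rw [norm_mul, norm_div, norm_pow, norm_mul, norm_of_nonneg (exp_pos _).le,
    norm_of_nonneg (rpow_nonneg ht.le _), norm_of_nonneg hΓ.le, Real.norm_eq_abs]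

theorem hasSum_pow_div_rpow_mul_add_one (hs : 0 < s) {x : ℝ} (hx : |x| < s ^ β) :
    HasSum (fun k : ℕ ↦ x ^ (k : ℕ) / s ^ (β * k + 1)) (s ^ (β - 1) / (s ^ β - x)) := by
  have hsβ : 0 < s ^ β := rpow_pos_of_pos hs β
  have hq : |x / s ^ β| < 1 := by rwa [abs_div, abs_of_pos hsβ, div_lt_one hsβ]
  have hterm (k : ℕ) : s⁻¹ * (x / s ^ β) ^ k = x ^ k / s ^ (β * k + 1) := by
    rw [rpow_add hs, rpow_one, rpow_mul_natCast hs.le, div_pow]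
    field_simp
  have hsum : s⁻¹ * (1 - x / s ^ β)⁻¹ = s ^ (β - 1) / (s ^ β - x) := by
    have : s ^ β - x ≠ 0 := by linarith [le_abs_self x]
    rw [rpow_sub_one hs.ne', one_sub_div hsβ.ne']
    field_simp
  simpa only [hterm, hsum] using (hasSum_geometric_of_abs_lt_one hq).mul_left s⁻¹

end MittagLefflerTerm

theorem laplace_mittagLeffler {β s x : ℝ} (hβ : 0 ≤ β) (hs : 0 < s) (hx : |x| < s ^ β) :
    IntegrableOn (fun t ↦ exp (-s * t) * mittagLeffler β 1 (x * t ^ β)) (Ioi 0) ∧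
    ∫ t in Ioi 0, exp (-s * t) * mittagLeffler β 1 (x * t ^ β) = s ^ (β - 1) / (s ^ β - x) := by
  set F : ℕ → ℝ → ℝ := fun k t ↦ exp (-s * t) * ((x * t ^ β) ^ k / Gamma (β * k + 1))
  have hF_tsum :
      (fun t ↦ exp (-s * t) * mittagLeffler β 1 (x * t ^ β)) = fun t ↦ ∑' k, F k t := by
    ext t
    exact tsum_mul_left.symm
  have hF_int k : IntegrableOn (F k) (Ioi 0) :=
    integrableOn_exp_neg_mul_mul_pow_div_Gamma hβ hs x k
  have hF_norm : Summable fun k ↦ ∫ t in Ioi 0, ‖F k t‖ := by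
    have hnorm k : ∫ t in Ioi 0, ‖F k t‖ = |x| ^ k / s ^ (β * k + 1) := by
      rw [setIntegral_congr_fun measurableSet_Ioi fun t ht ↦
        norm_exp_neg_mul_mul_pow_div_Gamma hβ ht x k]
      exact integral_exp_neg_mul_mul_pow_div_Gamma hβ hs |x| k
    simp_rw [hnorm]
    exact (hasSum_pow_div_rpow_mul_add_one hs (by rwa [abs_abs])).summable
  rw [hF_tsum]
  refine ⟨integrable_tsum_of_summable_integral_norm hF_int hF_norm, ?_⟩
  rw [← integral_tsum_of_summable_integral_norm hF_int hF_norm]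
  simp_rw [F, integral_exp_neg_mul_mul_pow_div_Gamma hβ hs]
  exact (hasSum_pow_div_rpow_mul_add_one hs hx).tsum_eq

/-- Laplace transform of `t ↦ 1 − E_β(-a t^β)`:
it is absolutely integrable and equals `a / (s (s^β + a))` for `s^β > |a|`. -/
theorem laplace_one_sub_mittagLeffler (β a s : ℝ) (hβ : 0 < β)
    (hs : 0 < s) (hsa : |a| < s ^ β) :
    IntegrableOn
      (fun t : ℝ => Real.exp (-s * t) * (1 - mittagLeffler β 1 (-a * t ^ β))) (Set.Ioi 0) ∧
    ∫ t in Set.Ioi (0:ℝ), Real.exp (-s * t) * (1 - mittagLeffler β 1 (-a * t ^ β))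
      = a / (s * (s ^ β + a)) := by
  obtain ⟨hE_int, hE⟩ := laplace_mittagLeffler hβ.le hs (x := -a) (by rwa [abs_neg])
  have hexp_int : IntegrableOn (fun t ↦ exp (-s * t)) (Ioi 0) := exp_neg_integrableOn_Ioi 0 hs
  have hexp : ∫ t in Ioi 0, exp (-s * t) = 1 / s := by
    simpa using integral_exp_neg_mul_mul_rpow (c := 0) (by norm_num) hs
  simp_rw [mul_one_sub]
  refine ⟨hexp_int.sub hE_int, ?_⟩
  have hsa_ne : s ^ β + a ≠ 0 := by linarith [neg_abs_le a]
  rw [integral_sub hexp_int hE_int, hexp, hE, sub_neg_eq_add, rpow_sub_one hs.ne']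
  field_simp
  ring
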